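/- For every n ≥ 0, R_n(t) = r_{n+1}(t) + r_n(t), where r_0(t) := 0. -/

import Mathlib

/-!
Because the weight is even, `P_n(-x) = (-1)^n P_n(x)`, so the three-term recurrence has no
diagonal term: `x P_n = P_{n+1} + (h_n / h_{n-1}) P_{n-1}`. Writing
`P_n² / y² = P_n (y P_n) / y³` and inserting the recurrence gives
`∫ P_n² w / y² = ∫ P_{n+1} P_n w / y³ + (h_n / h_{n-1}) ∫ P_n P_{n-1} w / y³`,
which after multiplication by `2t / h_n` is `r_{n+1} + r_n`. The factor `exp (-t / y²)` keeps
`w / y³` bounded, so all these integrals exist and are linear in the polynomial.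
-/

open Polynomial Finset MeasureTheory

theorem Polynomial.Monic.degree_sub_lt {R : Type*} [Ring R] [Nontrivial R] {p q : R[X]}
    (hp : p.Monic) (hq : q.Monic) (hpq : p.natDegree = q.natDegree) :
    (p - q).degree < p.natDegree := by
  rw [← degree_eq_natDegree hp.ne_zero]
  refine degree_sub_lt_left ?_ hp.ne_zero (by rw [hp.leadingCoeff, hq.leadingCoeff])
  rw [degree_eq_natDegree hp.ne_zero, degree_eq_natDegree hq.ne_zero, hpq]

structure IsMonicOrthogonal {K : Type*} [Field K] (L : K[X] →ₗ[K] K) (P : ℕ → K[X])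
    (h : ℕ → K) : Prop where
  monic : ∀ n, (P n).Monic
  natDegree_eq : ∀ n, (P n).natDegree = n
  map_mul : ∀ j k, L (P j * P k) = if j = k then h j else 0
  ne_zero : ∀ n, h n ≠ 0

namespace IsMonicOrthogonal

variable {K : Type*} [Field K] {L : K[X] →ₗ[K] K} {P : ℕ → K[X]} {h : ℕ → K}
  (hP : IsMonicOrthogonal L P h)
include hP

theorem degree_eq (n : ℕ) : (P n).degree = n := by
  rw [degree_eq_natDegree (hP.monic n).ne_zero, hP.natDegree_eq]

theorem span_image_Iio (n : ℕ) : Submodule.span K (P '' Set.Iio n) = degreeLT K n :=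
  Sequence.span_degreeLT ⟨P, hP.degree_eq⟩ fun i _ => by simp [(hP.monic i).leadingCoeff]

theorem map_mul_eq_zero_of_degree_lt {n : ℕ} {q : K[X]} (hq : q.degree < n) :
    L (P n * q) = 0 := by
  have hle : degreeLT K n ≤ LinearMap.ker (L ∘ₗ LinearMap.mulLeft K (P n)) := by
    rw [← hP.span_image_Iio, Submodule.span_le]
    rintro _ ⟨i, hi, rfl⟩
    simp [hP.map_mul, (Set.mem_Iio.1 hi).ne']
  exact hle (mem_degreeLT.2 hq)

theorem eq_zero_of_degree_lt {n : ℕ} {q : K[X]} (hq : q.degree < n)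
    (horth : ∀ i < n, L (q * P i) = 0) : q = 0 := by
  by_contra hq0
  set d := q.natDegree
  have hd : d < n := by rwa [degree_eq_natDegree hq0, Nat.cast_lt] at hq
  have hc : q.leadingCoeff ≠ 0 := leadingCoeff_ne_zero.2 hq0
  have hlow : (q - C q.leadingCoeff * P d).degree < d := by
    rw [← degree_eq_natDegree hq0]
    refine degree_sub_lt_left ?_ hq0 ?_
    · rw [degree_C_mul hc, hP.degree_eq, degree_eq_natDegree hq0]
    · simp [(hP.monic d).leadingCoeff]
  have hlead : L (q * P d) = q.leadingCoeff * h d := by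
    rw [show q * P d = P d * (q - C q.leadingCoeff * P d) + q.leadingCoeff • (P d * P d) by
        rw [smul_eq_C_mul]; ring, map_add, map_smul, hP.map_mul_eq_zero_of_degree_lt hlow,
      hP.map_mul, if_pos rfl, zero_add, smul_eq_mul]
  rw [horth d hd] at hlead
  exact mul_ne_zero hc (hP.ne_zero d) hlead.symm

theorem eq_sum_of_degree_lt {m : ℕ} {q : K[X]} (hq : q.degree < m) :
    q = ∑ i ∈ range m, C (L (q * P i) / h i) * P i := by
  rw [← sub_eq_zero]
  refine hP.eq_zero_of_degree_lt (n := m) (mem_degreeLT.1 ?_) fun j hj => ?_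
  · refine Submodule.sub_mem _ (mem_degreeLT.2 hq) (Submodule.sum_mem _ fun i hi => ?_)
    rw [← smul_eq_C_mul]
    exact Submodule.smul_mem _ _ (mem_degreeLT.2 (by
      rw [hP.degree_eq, Nat.cast_lt]; exact mem_range.1 hi))
  · simp only [sub_mul, sum_mul, ← smul_eq_C_mul, smul_mul_assoc, map_sub, map_sum, map_smul,
      hP.map_mul, smul_eq_mul, mul_ite, mul_zero, sum_ite_eq', mem_range, if_pos hj]
    rw [div_mul_cancel₀ _ (hP.ne_zero j), sub_self]

theorem degree_X_mul_sub_lt (n : ℕ) : (X * P n - P (n + 1)).degree < ↑(n + 1) := by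
  have hXP : (X * P n).natDegree = n + 1 := by
    rw [natDegree_X_mul (hP.monic n).ne_zero, hP.natDegree_eq]
  simpa only [hXP] using
    (monic_X.mul (hP.monic n)).degree_sub_lt (hP.monic (n + 1)) (by rw [hXP, hP.natDegree_eq])

theorem map_mul_X_mul_of_succ_lt {n i : ℕ} (hi : i + 1 < n) : L (P n * (X * P i)) = 0 := by
  refine hP.map_mul_eq_zero_of_degree_lt ?_
  rw [← mul_comm, degree_mul_X, hP.degree_eq]
  exact_mod_cast hi

theorem X_mul_eq_add_sum (n : ℕ) :
    X * P n = P (n + 1) + ∑ i ∈ range (n + 1), C (L (P n * (X * P i)) / h i) * P i := by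
  rw [← sub_eq_iff_eq_add']
  refine (hP.eq_sum_of_degree_lt (hP.degree_X_mul_sub_lt n)).trans (sum_congr rfl fun i hi => ?_)
  rw [sub_mul, map_sub, hP.map_mul, if_neg (mem_range.1 hi).ne', sub_zero, mul_assoc, mul_left_comm]

theorem map_mul_X_mul_pred (n : ℕ) : L (P (n + 1) * (X * P n)) = h (n + 1) := by
  calc L (P (n + 1) * (X * P n))
        = L (P (n + 1) * P (n + 1)) + L (P (n + 1) * (X * P n - P (n + 1))) := by
          rw [← map_add, ← mul_add, add_sub_cancel]
    _ = h (n + 1) := by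
          rw [hP.map_mul, if_pos rfl, hP.map_mul_eq_zero_of_degree_lt (hP.degree_X_mul_sub_lt n),
            add_zero]

theorem comp_neg_X_eq (hL : ∀ p, L (p.comp (-X)) = L p) (n : ℕ) :
    (P n).comp (-X) = (-1) ^ n * P n := by
  set Q := (-1) ^ n * (P n).comp (-X)
  have hQ : Q.Monic := by
    simpa only [hP.natDegree_eq] using (hP.monic n).neg_one_pow_natDegree_mul_comp_neg_X
  have hQdeg : Q.natDegree = n := by
    rcases neg_one_pow_eq_or K[X] n with hs | hs <;>
      simp [Q, hs, natDegree_comp, hP.natDegree_eq]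
  have hcomp : ∀ i < n, L ((P n).comp (-X) * P i) = 0 := fun i hi => by
    rw [← hL, mul_comp_neg_X, comp_neg_X_comp_neg_X]
    refine hP.map_mul_eq_zero_of_degree_lt (degree_le_natDegree.trans_lt ?_)
    rw [natDegree_comp, natDegree_neg, natDegree_X, mul_one, hP.natDegree_eq]
    exact_mod_cast hi
  have hPQ : P n - Q = 0 := by
    refine hP.eq_zero_of_degree_lt (n := n) ?_ fun i hi => ?_
    · simpa only [hP.natDegree_eq] using
        (hP.monic n).degree_sub_lt hQ (by rw [hP.natDegree_eq, hQdeg])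
    · rcases neg_one_pow_eq_or K[X] n with hs | hs <;>
        simp [Q, hs, sub_mul, add_mul, hP.map_mul, hi.ne', hcomp i hi]
  rcases neg_one_pow_eq_or K[X] n with hs | hs <;>
    simp only [Q, hs] at hPQ ⊢
  · linear_combination -hPQ
  · linear_combination hPQ

theorem map_mul_X_mul_self [CharZero K] (hL : ∀ p, L (p.comp (-X)) = L p) (n : ℕ) :
    L (P n * (X * P n)) = 0 := by
  have hodd : (P n * (X * P n)).comp (-X) = -(P n * (X * P n)) := by
    rw [mul_comp_neg_X, mul_comp_neg_X, hP.comp_neg_X_eq hL, X_comp]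
    rcases neg_one_pow_eq_or K[X] n with hs | hs <;> rw [hs] <;> ring
  rw [← self_eq_neg, ← map_neg, ← hodd, hL]

theorem X_mul_zero [CharZero K] (hL : ∀ p, L (p.comp (-X)) = L p) : X * P 0 = P 1 := by
  rw [hP.X_mul_eq_add_sum, sum_range_one, hP.map_mul_X_mul_self hL, zero_div, C_0, zero_mul,
    add_zero]

theorem X_mul_succ [CharZero K] (hL : ∀ p, L (p.comp (-X)) = L p) (n : ℕ) :
    X * P (n + 1) = P (n + 2) + C (h (n + 1) / h n) * P n := by
  rw [hP.X_mul_eq_add_sum, sum_range_succ, sum_range_succ, hP.map_mul_X_mul_self hL,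
    hP.map_mul_X_mul_pred, sum_eq_zero fun i hi => by
      rw [hP.map_mul_X_mul_of_succ_lt (by simpa using mem_range.1 hi), zero_div, C_0, zero_mul]]
  simp only [zero_add, zero_div, map_zero, zero_mul, add_zero]

end IsMonicOrthogonal

noncomputable def momentFunctional (f : ℝ → ℝ) (a b : ℝ)
    (hf : IntervalIntegrable f volume a b) : ℝ[X] →ₗ[ℝ] ℝ where
  toFun p := ∫ x in a..b, p.eval x * f x
  map_add' p q := by
    simp only [eval_add, add_mul]
    exact intervalIntegral.integral_add (hf.continuousOn_mul p.continuous.continuousOn)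
      (hf.continuousOn_mul q.continuous.continuousOn)
  map_smul' c p := by
    simp only [eval_smul, smul_eq_mul, mul_assoc, intervalIntegral.integral_const_mul,
      RingHom.id_apply]

@[simp]
theorem momentFunctional_apply (f : ℝ → ℝ) (a b : ℝ) (hf : IntervalIntegrable f volume a b)
    (p : ℝ[X]) : momentFunctional f a b hf p = ∫ x in a..b, p.eval x * f x :=
  rfl

theorem momentFunctional_comp_neg_X {f : ℝ → ℝ} {a : ℝ}
    (hf : IntervalIntegrable f volume (-a) a) (heven : ∀ x, f (-x) = f x) (p : ℝ[X]) :
    momentFunctional f (-a) a hf (p.comp (-X)) = momentFunctional f (-a) a hf p := by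
  simp only [momentFunctional_apply, eval_comp, eval_neg, eval_X]
  conv_lhs => enter [1, x]; rw [← heven x]
  rw [intervalIntegral.integral_comp_neg (fun x => p.eval x * f x), neg_neg]

noncomputable def perturbedJacobiWeight (α t x : ℝ) : ℝ :=
  if x = 0 then 0 else (1 - x ^ 2) ^ α * Real.exp (-t / x ^ 2)

variable {α t : ℝ}

theorem perturbedJacobiWeight_neg (x : ℝ) :
    perturbedJacobiWeight α t (-x) = perturbedJacobiWeight α t x := by
  simp [perturbedJacobiWeight]

theorem measurable_perturbedJacobiWeight : Measurable (perturbedJacobiWeight α t) :=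
  Measurable.ite (measurableSet_singleton 0) measurable_const (by fun_prop)

theorem exp_neg_div_sq_le (ht : 0 < t) {x : ℝ} (hx : x ≠ 0) :
    Real.exp (-t / x ^ 2) ≤ 2 * x ^ 4 / t ^ 2 := by
  have h := Real.pow_div_factorial_le_exp (t / x ^ 2) (by positivity) 2
  rw [neg_div, Real.exp_neg, inv_le_comm₀ (Real.exp_pos _) (by positivity)]
  refine le_trans (le_of_eq ?_) h
  field_simp
  norm_num

theorem abs_perturbedJacobiWeight_div_pow_three_le (hα : 0 ≤ α) (ht : 0 < t) {x : ℝ}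
    (hx : |x| ≤ 1) : |perturbedJacobiWeight α t x / x ^ 3| ≤ 2 / t ^ 2 := by
  rcases eq_or_ne x 0 with rfl | hx0
  · simp [perturbedJacobiWeight]; positivity
  have hsq : x ^ 2 ≤ 1 := by nlinarith [sq_abs x, abs_nonneg x]
  have h1 : (1 - x ^ 2) ^ α ≤ 1 := Real.rpow_le_one (by linarith) (by nlinarith) hα
  have h0 : 0 ≤ (1 - x ^ 2) ^ α := Real.rpow_nonneg (by linarith) α
  have hexp := exp_neg_div_sq_le ht hx0
  rw [perturbedJacobiWeight, if_neg hx0, abs_div, abs_mul, abs_of_nonneg h0,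
    Real.abs_exp, abs_pow, div_le_div_iff₀ (by positivity) (by positivity)]
  calc (1 - x ^ 2) ^ α * Real.exp (-t / x ^ 2) * t ^ 2 ≤ 1 * (2 * x ^ 4 / t ^ 2) * t ^ 2 := by
        gcongr
    _ = 2 * |x| ^ 3 * |x| := by
        rw [← (by decide : Even 4).pow_abs]; field_simp
    _ ≤ 2 * |x| ^ 3 * 1 := by gcongr
    _ = 2 * |x| ^ 3 := mul_one _

theorem intervalIntegrable_perturbedJacobiWeight_div_pow_three (hα : 0 ≤ α) (ht : 0 < t) :
    IntervalIntegrable (fun x => perturbedJacobiWeight α t x / x ^ 3) volume (-1) 1 := by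
  refine IntervalIntegrable.mono_fun' (g := fun _ => 2 / t ^ 2) intervalIntegrable_const
    (measurable_perturbedJacobiWeight.div (measurable_id.pow_const 3)).aestronglyMeasurable ?_
  rw [Set.uIoc_of_le (by norm_num)]
  filter_upwards [ae_restrict_mem measurableSet_Ioc] with x hx
  exact abs_perturbedJacobiWeight_div_pow_three_le hα ht (abs_le.2 ⟨hx.1.le, hx.2⟩)

theorem intervalIntegrable_perturbedJacobiWeight (hα : 0 ≤ α) (ht : 0 < t) :
    IntervalIntegrable (perturbedJacobiWeight α t) volume (-1) 1 := by
  have h : perturbedJacobiWeight α t =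
      fun x => x ^ 3 * (perturbedJacobiWeight α t x / x ^ 3) := by
    ext x
    rcases eq_or_ne x 0 with rfl | hx
    · simp [perturbedJacobiWeight]
    · field_simp
  rw [h]
  exact (intervalIntegrable_perturbedJacobiWeight_div_pow_three hα ht).continuousOn_mul
    (continuous_pow 3).continuousOn

theorem stmt_5
    (α t : ℝ) (hα : 0 < α) (ht : 0 < t)
    (w : ℝ → ℝ)
    (hw : ∀ x : ℝ, x ≠ 0 → w x = (1 - x ^ 2) ^ α * Real.exp (-t / x ^ 2))
    (hw0 : w 0 = 0)
    (P : ℕ → Polynomial ℝ)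
    (hmonic : ∀ n, (P n).Monic)
    (hdeg : ∀ n, (P n).natDegree = n)
    (h : ℕ → ℝ)
    (hpos : ∀ n, 0 < h n)
    (horth : ∀ j k, (∫ x in (-1:ℝ)..1, (P j).eval x * (P k).eval x * w x)
      = if j = k then h j else 0)
    (R : ℕ → ℝ)
    (hR : ∀ n, R n = 2 * t / h n *
      ∫ y in (-1:ℝ)..1, ((P n).eval y) ^ 2 * w y / y ^ 2)
    (r : ℕ → ℝ) (hr0 : r 0 = 0)
    (hr : ∀ n : ℕ, 1 ≤ n → r n = 2 * t / h (n - 1) *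
      ∫ y in (-1:ℝ)..1, (P n).eval y * (P (n - 1)).eval y * w y / y ^ 3)
    :
    ∀ n : ℕ, R n = r (n + 1) + r n := by
  obtain rfl : w = perturbedJacobiWeight α t := funext fun x => by
    by_cases hx : x = 0 <;> simp [perturbedJacobiWeight, hx, hw, hw0]
  set L := momentFunctional _ (-1) 1 (intervalIntegrable_perturbedJacobiWeight hα.le ht)
  set J := momentFunctional _ (-1) 1
    (intervalIntegrable_perturbedJacobiWeight_div_pow_three hα.le ht)
  have hP : IsMonicOrthogonal L P h :=
    ⟨hmonic, hdeg, fun j k => by simpa [L, eval_mul] using horth j k, fun n => (hpos n).ne'⟩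
  have hL : ∀ p, L (p.comp (-X)) = L p :=
    momentFunctional_comp_neg_X _ perturbedJacobiWeight_neg
  have hRJ : ∀ n, R n = 2 * t / h n * J (X * P n * P n) := fun n => by
    rw [hR n]
    congr 1
    simp only [J, momentFunctional_apply, eval_mul, eval_X]
    congr 1 with x
    -- at `x = 0` both integrands are `0` by the convention `a / 0 = 0`
    rcases eq_or_ne x 0 with rfl | hx
    · simp
    · field_simp
  have hrJ : ∀ n, r (n + 1) = 2 * t / h n * J (P (n + 1) * P n) := fun n => by
    simp [hr (n + 1) (by omega), J, mul_div_assoc]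
  intro n
  cases n with
  | zero => rw [hRJ, hP.X_mul_zero hL, ← hrJ, hr0, add_zero]
  | succ n =>
    rw [hRJ, hP.X_mul_succ hL, hrJ, hrJ, add_mul, map_add, mul_assoc, mul_comm (P n),
      ← smul_eq_C_mul, map_smul, smul_eq_mul]
    field_simp [(hpos n).ne', (hpos (n + 1)).ne']
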